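/- For V(x) = |x|² and Ω > 0, if u is a minimizer of the rotating Gross–Pitaevskii problem with potential |x - b|² for some b = (b₁, b₂) ∈ ℝ² and 0 < Ω < 2, then v(x) = u(x + 4b/(4 - Ω²))·e^{-i·(2Ω/(4-Ω²))·x·b^⊥} is a minimizer of the problem with centered potential |x|² (after adjusting by an additive constant in the energy), where b^⊥ = (-b₂, b₁). -/

import Mathlib

open MeasureTheory Real Filter Topology Bornology

noncomputable section

abbrev R2 := EuclideanSpace ℝ (Fin 2)

/-- `i`-th partial derivative of a complex-valued function on `ℝ²`. -/
def pderivC (u : R2 → ℂ) (i : Fin 2) (x : R2) : ℂ :=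
  fderiv ℝ u x (EuclideanSpace.single i 1)

/-- `|∇u|²` computed coordinatewise. -/
def gradSq (u : R2 → ℂ) (x : R2) : ℝ := ∑ i : Fin 2, ‖pderivC u i x‖ ^ 2

/-- The `i`-th component of the current `(iu, ∇u) = i(u∇ū - ū∇u)/2`. -/
def current (u : R2 → ℂ) (i : Fin 2) (x : R2) : ℝ :=
  ((Complex.I * (u x * (starRingEnd ℂ) (pderivC u i x)
      - (starRingEnd ℂ) (u x) * pderivC u i x)) / 2).re

/-- `x^⊥ · (iu, ∇u)`. -/
def xperpCurrent (u : R2 → ℂ) (x : R2) : ℝ :=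
  (-(x 1)) * current u 0 x + (x 0) * current u 1 x

/-- The Gross–Pitaevskii energy functional `F_a(u)`. -/
def GPenergy (V : R2 → ℝ) (Ω a : ℝ) (u : R2 → ℂ) : ℝ :=
  (∫ x : R2, (gradSq u x + V x * ‖u x‖ ^ 2))
    - a / 2 * (∫ x : R2, ‖u x‖ ^ 4)
    - Ω * (∫ x : R2, xperpCurrent u x)

/-- Admissible (finite-energy, unit-mass) functions for the GP problem. -/
structure Admissible (V : R2 → ℝ) (u : R2 → ℂ) : Prop where
  diff : Differentiable ℝ u
  memL2 : MemLp u 2 (volume : Measure R2)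
  int_grad : Integrable (fun x : R2 => gradSq u x) volume
  int_pot : Integrable (fun x : R2 => V x * ‖u x‖ ^ 2) volume
  int_four : Integrable (fun x : R2 => ‖u x‖ ^ 4) volume
  int_curr : Integrable (fun x : R2 => xperpCurrent u x) volume
  mass : (∫ x : R2, ‖u x‖ ^ 2) = 1

/-- `Ω` is strictly below the critical rotational speed `Ω*` of `V`. -/
def BelowCritical (V : R2 → ℝ) (Ω : ℝ) : Prop :=
  ∃ Ω' : ℝ, Ω < Ω' ∧
    Tendsto (fun x : R2 => V x - Ω' ^ 2 / 4 * ‖x‖ ^ 2) (cobounded R2) atTop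

/-- Laplacian computed as the sum of the second coordinate derivatives. -/
def lap (f : R2 → ℝ) (x : R2) : ℝ :=
  ∑ i : Fin 2,
    fderiv ℝ (fun y => fderiv ℝ f y (EuclideanSpace.single i 1)) x (EuclideanSpace.single i 1)

/-- The hypotheses characterizing the positive radial ground state `w` of
`Δw - w + w³ = 0` in `ℝ²`. -/
structure IsGroundState (w : R2 → ℝ) : Prop where
  smooth : ContDiff ℝ 2 w
  pos : ∀ x, 0 < w x
  radial : ∀ x y : R2, ‖x‖ = ‖y‖ → w x = w y
  memL2 : MemLp w 2 (volume : Measure R2)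
  grad_memL2 : MemLp (fun x => gradient w x) 2 (volume : Measure R2)
  eqn : ∀ x, lap w x - w x + (w x) ^ 3 = 0

/-!
Write `W_V(x) = V(x) - Ω²|x|²/4`. Since
`|∇u|² - Ω x^⊥·(iu, ∇u) = |(∇ - i(Ω/2)x^⊥)u|² - (Ω²/4)|x|²|u|²`, the magnetic translation
`u ↦ u(· + c) e^{-i(Ω/2) c^⊥·x}` keeps the magnetic kinetic energy density (up to the shift
`x ↦ x + c`) and trades `W_{V₁}(x + c)` for `W_{V₂}(x)`. For `V₁ = |x - b|²`, `V₂ = |x|²` and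
`c = 4b/(4 - Ω²)`, completing the square gives `W_{V₂}(x) = W_{V₁}(x + c) + Ω²|b|²/(4 - Ω²)`.
So the translations by `c` and by `-c` carry admissible functions of each problem to the other
and change the energy by `±Ω²|b|²/(4 - Ω²)`; hence `v` is a minimizer because `u` is.
-/

open ComplexConjugate

section Moments

variable {E : Type*} [NormedAddCommGroup E] [MeasurableSpace E] [OpensMeasurableSpace E]
  {μ : Measure E} {f : E → ℝ}

lemma MeasureTheory.Integrable.norm_sub_sq_mul (hf : Integrable f μ) {p : E}
    (hp : Integrable (fun x => ‖x - p‖ ^ 2 * f x) μ) (q : E) :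
    Integrable (fun x => ‖x - q‖ ^ 2 * f x) μ := by
  refine ((hp.norm.const_mul 2).add (hf.norm.const_mul (2 * ‖p - q‖ ^ 2))).mono'
    (((continuous_id.sub continuous_const).norm.pow 2).aestronglyMeasurable.mul hf.1)
    (ae_of_all _ fun x => ?_)
  have htri : ‖x - q‖ ≤ ‖x - p‖ + ‖p - q‖ := norm_sub_le_norm_sub_add_norm_sub x p q
  have hsq : ‖x - q‖ ^ 2 ≤ 2 * ‖x - p‖ ^ 2 + 2 * ‖p - q‖ ^ 2 := by
    nlinarith [norm_nonneg (x - q), sq_nonneg (‖x - p‖ - ‖p - q‖)]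
  simp only [norm_mul, norm_pow, norm_norm, Pi.add_apply]
  nlinarith [norm_nonneg (f x)]

lemma MeasureTheory.Integrable.clm_apply_mul [NormedSpace ℝ E] (hf : Integrable f μ)
    (h2 : Integrable (fun x => ‖x‖ ^ 2 * f x) μ) (L : E →L[ℝ] ℝ) :
    Integrable (fun x => L x * f x) μ := by
  refine ((hf.norm.add h2.norm).const_mul ‖L‖).mono'
    (L.continuous.aestronglyMeasurable.mul hf.1) (ae_of_all _ fun x => ?_)
  have hL : ‖L x‖ ≤ ‖L‖ * (1 + ‖x‖ ^ 2) :=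
    (L.le_opNorm x).trans (by gcongr; nlinarith [sq_nonneg (‖x‖ - 1)])
  simp only [norm_mul, norm_pow, norm_norm, Pi.add_apply]
  nlinarith [norm_nonneg (f x)]

end Moments

lemma MeasureTheory.Integrable.of_eq_comp_add_right {G : Type*} [MeasurableSpace G] [AddGroup G]
    [MeasurableAdd G] {μ : Measure G} [μ.IsAddRightInvariant] {F g : G → ℝ} (c : G)
    (hg : Integrable g μ) (h : ∀ x, F x = g (x + c)) : Integrable F μ :=
  (funext h : F = _) ▸ hg.comp_add_right c

lemma Complex.sq_norm_sub_I_mul (U P : ℂ) (r : ℝ) :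
    ‖P - Complex.I * r * U‖ ^ 2 = ‖P‖ ^ 2 + r ^ 2 * ‖U‖ ^ 2 - 2 * r * (conj U * P).im := by
  simp [Complex.sq_norm, Complex.normSq_apply, Complex.mul_re, Complex.mul_im]
  ring

lemma Complex.im_conj_mul_sub_I_mul {U P E : ℂ} (r : ℝ) (hE : ‖E‖ = 1) :
    (conj (U * E) * ((P - Complex.I * r * U) * E)).im = (conj U * P).im - r * ‖U‖ ^ 2 := by
  have hE2 : conj E * E = 1 := by
    rw [mul_comm, Complex.mul_conj, Complex.normSq_eq_norm_sq, hE]; norm_num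
  have hU : conj U * U = ((‖U‖ ^ 2 : ℝ) : ℂ) := by
    rw [mul_comm, Complex.mul_conj, Complex.normSq_eq_norm_sq]
  have : conj (U * E) * ((P - Complex.I * r * U) * E)
      = conj U * P - Complex.I * ((r * ‖U‖ ^ 2 : ℝ) : ℂ) := by
    rw [map_mul, Complex.ofReal_mul, ← hU]
    linear_combination (conj U * (P - Complex.I * r * U)) * hE2
  rw [this, Complex.sub_im, Complex.I_mul_im, Complex.ofReal_re]

lemma current_eq_im (u : R2 → ℂ) (i : Fin 2) (x : R2) :
    current u i x = (conj (u x) * pderivC u i x).im := by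
  simp [current, Complex.mul_re, Complex.mul_im, Complex.sub_re, Complex.sub_im]
  ring

lemma abs_current_le (u : R2 → ℂ) (i : Fin 2) (x : R2) :
    |current u i x| ≤ (‖u x‖ ^ 2 + gradSq u x) / 2 := by
  have hP : ‖pderivC u i x‖ ^ 2 ≤ gradSq u x :=
    Finset.single_le_sum (f := fun j => ‖pderivC u j x‖ ^ 2) (fun j _ => sq_nonneg _)
      (Finset.mem_univ i)
  have hUP : |current u i x| ≤ ‖u x‖ * ‖pderivC u i x‖ := by
    rw [current_eq_im]
    simpa using Complex.abs_im_le_norm (conj (u x) * pderivC u i x)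
  nlinarith [sq_nonneg (‖u x‖ - ‖pderivC u i x‖)]

lemma measurable_current {u : R2 → ℂ} (hu : Continuous u) (i : Fin 2) :
    Measurable (current u i) := by
  have hu' : Measurable u := hu.measurable
  have hP : Measurable (pderivC u i) := measurable_fderiv_apply_const ℝ u _
  unfold current
  fun_prop

namespace Admissible

variable {V : R2 → ℝ} {u : R2 → ℂ}

lemma integrable_norm_sq (hu : Admissible V u) : Integrable (fun x => ‖u x‖ ^ 2) volume :=
  hu.memL2.integrable_norm_pow two_ne_zero

lemma integrable_current (hu : Admissible V u) (i : Fin 2) :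
    Integrable (current u i) volume :=
  ((hu.integrable_norm_sq.add hu.int_grad).div_const 2).mono'
    (measurable_current hu.diff.continuous i).aestronglyMeasurable
    (ae_of_all _ fun x => abs_current_le u i x)

end Admissible

def perp (c : R2) : R2 := !₂[-c 1, c 0]

lemma inner_perp (d x : R2) : inner ℝ (perp d) x = x 1 * d 0 - x 0 * d 1 := by
  simp [perp, PiLp.inner_apply, Fin.sum_univ_two]
  ring

def gaugeTranslate (c d : R2) (u : R2 → ℂ) (x : R2) : ℂ :=
  u (x + c) * Complex.exp (-Complex.I * (inner ℝ d x : ℂ))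

lemma norm_exp_neg_I_mul_ofReal (t : ℝ) : ‖Complex.exp (-Complex.I * t)‖ = 1 := by
  rw [Complex.norm_exp]; simp

lemma norm_gaugeTranslate (c d : R2) (u : R2 → ℂ) (x : R2) :
    ‖gaugeTranslate c d u x‖ = ‖u (x + c)‖ := by
  rw [gaugeTranslate, norm_mul, norm_exp_neg_I_mul_ofReal, mul_one]

lemma hasFDerivAt_gaugeTranslate (c d : R2) {u : R2 → ℂ} (hu : Differentiable ℝ u) (x : R2) :
    HasFDerivAt (gaugeTranslate c d u)
      (u (x + c) • (Complex.exp (-Complex.I * (inner ℝ d x : ℂ))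
          • (-Complex.I) • Complex.ofRealCLM.comp (innerSL ℝ d))
        + Complex.exp (-Complex.I * (inner ℝ d x : ℂ)) • fderiv ℝ u (x + c)) x := by
  have hphase : HasFDerivAt (fun y : R2 => -Complex.I * (inner ℝ d y : ℂ))
      ((-Complex.I) • Complex.ofRealCLM.comp (innerSL ℝ d)) x :=
    (Complex.ofRealCLM.comp (innerSL ℝ d)).hasFDerivAt.const_mul (-Complex.I)
  have htrans : HasFDerivAt (fun y : R2 => u (y + c)) (fderiv ℝ u (x + c)) x :=
    (hasFDerivAt_comp_add_right c).2 (hu (x + c)).hasFDerivAt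
  exact htrans.mul hphase.cexp

lemma differentiable_gaugeTranslate (c d : R2) {u : R2 → ℂ} (hu : Differentiable ℝ u) :
    Differentiable ℝ (gaugeTranslate c d u) :=
  fun x => (hasFDerivAt_gaugeTranslate c d hu x).differentiableAt

lemma pderivC_gaugeTranslate (c d : R2) {u : R2 → ℂ} (hu : Differentiable ℝ u) (i : Fin 2)
    (x : R2) :
    pderivC (gaugeTranslate c d u) i x =
      (pderivC u i (x + c) - Complex.I * (d i : ℝ) * u (x + c))
        * Complex.exp (-Complex.I * (inner ℝ d x : ℂ)) := by
  rw [pderivC, (hasFDerivAt_gaugeTranslate c d hu x).fderiv]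
  simp [pderivC, EuclideanSpace.inner_single_right]
  ring

lemma current_gaugeTranslate (c d : R2) {u : R2 → ℂ} (hu : Differentiable ℝ u) (i : Fin 2)
    (x : R2) :
    current (gaugeTranslate c d u) i x = current u i (x + c) - d i * ‖u (x + c)‖ ^ 2 := by
  rw [current_eq_im, current_eq_im, pderivC_gaugeTranslate c d hu, gaugeTranslate]
  exact Complex.im_conj_mul_sub_I_mul _ (norm_exp_neg_I_mul_ofReal _)

lemma gradSq_gaugeTranslate (c d : R2) {u : R2 → ℂ} (hu : Differentiable ℝ u) (x : R2) :
    gradSq (gaugeTranslate c d u) x = gradSq u (x + c) + ‖d‖ ^ 2 * ‖u (x + c)‖ ^ 2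
      - 2 * (d 0 * current u 0 (x + c) + d 1 * current u 1 (x + c)) := by
  simp only [gradSq, Fin.sum_univ_two, pderivC_gaugeTranslate c d hu, norm_mul,
    norm_exp_neg_I_mul_ofReal, mul_one, Complex.sq_norm_sub_I_mul, current_eq_im,
    EuclideanSpace.real_norm_sq_eq]
  ring

lemma xperpCurrent_gaugeTranslate (c d : R2) {u : R2 → ℂ} (hu : Differentiable ℝ u) (x : R2) :
    xperpCurrent (gaugeTranslate c d u) x = xperpCurrent u (x + c)
      + c 1 * current u 0 (x + c) - c 0 * current u 1 (x + c)
      + inner ℝ (perp d) x * ‖u (x + c)‖ ^ 2 := by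
  simp only [xperpCurrent, current_gaugeTranslate c d hu, inner_perp, PiLp.add_apply]
  ring

lemma Admissible.gaugeTranslate {V₁ V₂ : R2 → ℝ} {u : R2 → ℂ} (hu : Admissible V₁ u) (c d : R2)
    (hpot : Integrable (fun y => V₂ (y - c) * ‖u y‖ ^ 2) volume)
    (hquad : Integrable (fun y => ‖y‖ ^ 2 * ‖u y‖ ^ 2) volume) :
    Admissible V₂ (gaugeTranslate c d u) where
  diff := differentiable_gaugeTranslate c d hu.diff
  memL2 := (hu.memL2.comp_measurePreserving (measurePreserving_add_right volume c)).of_le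
    (differentiable_gaugeTranslate c d hu.diff).continuous.aestronglyMeasurable
    (ae_of_all _ fun x => (norm_gaugeTranslate c d u x).le)
  int_grad := by
    refine .of_eq_comp_add_right c ((hu.int_grad.add
      (hu.integrable_norm_sq.const_mul (‖d‖ ^ 2))).sub
      ((((hu.integrable_current 0).const_mul (d 0)).add
        ((hu.integrable_current 1).const_mul (d 1))).const_mul 2)) fun x => ?_
    simp only [gradSq_gaugeTranslate c d hu.diff, Pi.add_apply, Pi.sub_apply]
  int_pot := .of_eq_comp_add_right c hpot fun x => by
    rw [norm_gaugeTranslate, add_sub_cancel_right]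
  int_four := .of_eq_comp_add_right c hu.int_four fun x => by rw [norm_gaugeTranslate]
  int_curr := by
    refine .of_eq_comp_add_right c (((hu.int_curr.add
      ((hu.integrable_current 0).const_mul (c 1))).sub
      ((hu.integrable_current 1).const_mul (c 0))).add
      ((hu.integrable_norm_sq.clm_apply_mul hquad (innerSL ℝ (perp d))).sub
        (hu.integrable_norm_sq.const_mul (inner ℝ (perp d) c)))) fun x => ?_
    simp only [xperpCurrent_gaugeTranslate c d hu.diff, innerSL_apply_apply, Pi.add_apply,
      Pi.sub_apply, inner_add_right]
    ring
  mass := by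
    simp only [norm_gaugeTranslate]
    rw [integral_add_right_eq_self (fun y => ‖u y‖ ^ 2) c]
    exact hu.mass

def magneticTranslate (Ω : ℝ) (c : R2) : (R2 → ℂ) → R2 → ℂ :=
  gaugeTranslate c ((Ω / 2) • perp c)

def energyDensity (V : R2 → ℝ) (Ω : ℝ) (u : R2 → ℂ) (x : R2) : ℝ :=
  gradSq u x + V x * ‖u x‖ ^ 2 - Ω * xperpCurrent u x

lemma Admissible.GPenergy_eq {V : R2 → ℝ} {u : R2 → ℂ} (hu : Admissible V u) (Ω a : ℝ) :
    GPenergy V Ω a u = (∫ x, energyDensity V Ω u x) - a / 2 * ∫ x, ‖u x‖ ^ 4 := by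
  simp only [GPenergy, energyDensity]
  rw [integral_sub (f := fun x => gradSq u x + V x * ‖u x‖ ^ 2) (hu.int_grad.add hu.int_pot)
    (hu.int_curr.const_mul Ω), integral_const_mul]
  ring

lemma energyDensity_magneticTranslate (V₁ V₂ : R2 → ℝ) (Ω : ℝ) (c : R2) {u : R2 → ℂ}
    (hu : Differentiable ℝ u) (x : R2) :
    energyDensity V₂ Ω (magneticTranslate Ω c u) x = energyDensity V₁ Ω u (x + c)
      + (V₂ x - Ω ^ 2 / 4 * ‖x‖ ^ 2 - (V₁ (x + c) - Ω ^ 2 / 4 * ‖x + c‖ ^ 2))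
        * ‖u (x + c)‖ ^ 2 := by
  rw [magneticTranslate, energyDensity, energyDensity, gradSq_gaugeTranslate _ _ hu,
    xperpCurrent_gaugeTranslate _ _ hu, norm_gaugeTranslate, inner_perp]
  simp [xperpCurrent, EuclideanSpace.real_norm_sq_eq, perp]
  ring

lemma GPenergy_magneticTranslate {V₁ V₂ : R2 → ℝ} {Ω : ℝ} (a C : ℝ) {c : R2} {u : R2 → ℂ}
    (hu : Admissible V₁ u) (hv : Admissible V₂ (magneticTranslate Ω c u))
    (hV : ∀ x, V₂ x - Ω ^ 2 / 4 * ‖x‖ ^ 2 = V₁ (x + c) - Ω ^ 2 / 4 * ‖x + c‖ ^ 2 + C) :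
    GPenergy V₂ Ω a (magneticTranslate Ω c u) = GPenergy V₁ Ω a u + C := by
  have hdens : ∀ x, energyDensity V₂ Ω (magneticTranslate Ω c u) x
      = (fun y => energyDensity V₁ Ω u y + C * ‖u y‖ ^ 2) (x + c) := fun x => by
    rw [energyDensity_magneticTranslate V₁ V₂ Ω c hu.diff, hV]
    ring
  have hint : Integrable (energyDensity V₁ Ω u) volume :=
    (hu.int_grad.add hu.int_pot).sub (hu.int_curr.const_mul Ω)
  rw [hu.GPenergy_eq, hv.GPenergy_eq, integral_congr_ae (ae_of_all _ hdens),
    integral_add_right_eq_self (fun y => energyDensity V₁ Ω u y + C * ‖u y‖ ^ 2) c,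
    integral_add hint (hu.integrable_norm_sq.const_mul C), integral_const_mul, hu.mass]
  simp only [magneticTranslate, norm_gaugeTranslate]
  rw [integral_add_right_eq_self (fun y => ‖u y‖ ^ 4) c]
  ring

lemma centered_trap_eq_shifted_trap_add {E : Type*} [NormedAddCommGroup E]
    [InnerProductSpace ℝ E] {Ω : ℝ} (hΩ : Ω ^ 2 ≠ 4) (b x : E) :
    ‖x‖ ^ 2 - Ω ^ 2 / 4 * ‖x‖ ^ 2
      = ‖x + (4 / (4 - Ω ^ 2)) • b - b‖ ^ 2 - Ω ^ 2 / 4 * ‖x + (4 / (4 - Ω ^ 2)) • b‖ ^ 2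
        + Ω ^ 2 / (4 - Ω ^ 2) * ‖b‖ ^ 2 := by
  have hs : 4 - Ω ^ 2 ≠ 0 := sub_ne_zero.2 (Ne.symm hΩ)
  rw [show x + (4 / (4 - Ω ^ 2)) • b - b = x + (4 / (4 - Ω ^ 2) - 1) • b by module,
    norm_add_sq_real, norm_add_sq_real, norm_smul, norm_smul,
    inner_smul_right, inner_smul_right, mul_pow, mul_pow, Real.norm_eq_abs, Real.norm_eq_abs,
    sq_abs, sq_abs]
  field_simp
  ring

theorem gauge_translation_of_minimizer_general
    (Ω a : ℝ) (hΩ : 0 < Ω) (hΩ2 : Ω < 2)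
    (b : R2)
    (u : R2 → ℂ)
    (hadm : Admissible (fun x : R2 => ‖x - b‖ ^ 2) u)
    (hmin : ∀ u' : R2 → ℂ, Admissible (fun x : R2 => ‖x - b‖ ^ 2) u' →
      GPenergy (fun x : R2 => ‖x - b‖ ^ 2) Ω a u
        ≤ GPenergy (fun x : R2 => ‖x - b‖ ^ 2) Ω a u')
    (v : R2 → ℂ)
    (hv : v = fun x : R2 =>
      u (x + (4 / (4 - Ω ^ 2)) • b)
        * Complex.exp (-Complex.I *
            (((2 * Ω / (4 - Ω ^ 2)) * (x 0 * (-(b 1)) + x 1 * (b 0)) : ℝ) : ℂ))) :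
    Admissible (fun x : R2 => ‖x‖ ^ 2) v
    ∧ ∀ u' : R2 → ℂ, Admissible (fun x : R2 => ‖x‖ ^ 2) u' →
        GPenergy (fun x : R2 => ‖x‖ ^ 2) Ω a v
          ≤ GPenergy (fun x : R2 => ‖x‖ ^ 2) Ω a u' := by
  have hΩ4 : Ω ^ 2 ≠ 4 := by nlinarith
  set c : R2 := (4 / (4 - Ω ^ 2)) • b
  have htrap := centered_trap_eq_shifted_trap_add hΩ4 b
  have hv' : v = magneticTranslate Ω c u := by
    subst hv
    funext x
    rw [magneticTranslate, gaugeTranslate, real_inner_smul_left, inner_perp]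
    simp only [c, PiLp.smul_apply, smul_eq_mul]
    ring_nf
  have hquad : Integrable (fun y : R2 => ‖y‖ ^ 2 * ‖u y‖ ^ 2) volume := by
    simpa using hadm.integrable_norm_sq.norm_sub_sq_mul hadm.int_pot 0
  have hvadm : Admissible (fun x : R2 => ‖x‖ ^ 2) v := hv' ▸
    hadm.gaugeTranslate c _ (hadm.integrable_norm_sq.norm_sub_sq_mul hadm.int_pot c) hquad
  have hEv := GPenergy_magneticTranslate (V₁ := fun x => ‖x - b‖ ^ 2) a _ hadm (hv' ▸ hvadm)
    htrap
  refine ⟨hvadm, fun u' hu' => ?_⟩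
  have hpot' : Integrable (fun y : R2 => ‖y - -c - b‖ ^ 2 * ‖u' y‖ ^ 2) volume := by
    have hshift : ∀ y : R2, y - -c - b = y - (b - c) := fun y => by abel
    simpa only [hshift] using
      hu'.integrable_norm_sq.norm_sub_sq_mul (p := 0) (by simpa using hu'.int_pot) (b - c)
  have hwadm : Admissible (fun x : R2 => ‖x - b‖ ^ 2) (magneticTranslate Ω (-c) u') :=
    hu'.gaugeTranslate (-c) _ hpot' hu'.int_pot
  have hEw := GPenergy_magneticTranslate a (-(Ω ^ 2 / (4 - Ω ^ 2) * ‖b‖ ^ 2)) hu' hwadm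
    fun x => by
      have := htrap (x - c)
      rw [sub_add_cancel] at this
      simp only [← sub_eq_add_neg]
      linarith
  rw [← hv'] at hEv
  linarith [hmin _ hwadm]

/-- if `u` minimizes the rotating GP problem with shifted harmonic trap
`|x - b|²` and `0 < Ω < 2`, then the gauge-translated function
`v(x) = u(x + 4b/(4-Ω²)) e^{-i(2Ω/(4-Ω²)) x·b^⊥}` minimizes the problem with the
centered trap `|x|²`. -/
theorem gauge_translation_of_minimizer
    (Ω a : ℝ) (hΩ : 0 < Ω) (hΩ2 : Ω < 2)
    (b : R2) (w : R2 → ℝ) (hw : IsGroundState w)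
    (u : R2 → ℂ)
    (hadm : Admissible (fun x : R2 => ‖x - b‖ ^ 2) u)
    (hmin : ∀ u' : R2 → ℂ, Admissible (fun x : R2 => ‖x - b‖ ^ 2) u' →
      GPenergy (fun x : R2 => ‖x - b‖ ^ 2) Ω a u
        ≤ GPenergy (fun x : R2 => ‖x - b‖ ^ 2) Ω a u')
    (v : R2 → ℂ)
    (hv : v = fun x : R2 =>
      u (x + (4 / (4 - Ω ^ 2)) • b)
        * Complex.exp (-Complex.I *
            (((2 * Ω / (4 - Ω ^ 2)) * (x 0 * (-(b 1)) + x 1 * (b 0)) : ℝ) : ℂ))) :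
    Admissible (fun x : R2 => ‖x‖ ^ 2) v
    ∧ ∀ u' : R2 → ℂ, Admissible (fun x : R2 => ‖x‖ ^ 2) u' →
        GPenergy (fun x : R2 => ‖x‖ ^ 2) Ω a v
          ≤ GPenergy (fun x : R2 => ‖x‖ ^ 2) Ω a u' :=
  gauge_translation_of_minimizer_general Ω a hΩ hΩ2 b u hadm hmin v hv
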